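/- Let A be a unital C*-algebra, let a ∈ A be selfadjoint with 0 ≤ a, and let c ≥ 0 be such that the spectrum of a is contained in [c,∞). Then for every ζ ∈ ℂ with ζ ∉ [c,∞), writing ψ = arg(ζ − c) ∈ (0,2π), the element a − ζ·1 is invertible and the square root a^{1/2} satisfies: ‖a^{1/2}·(a − ζ·1)⁻¹‖ ≤ (c + 1)^{1/2}·c(ψ)·|ζ − c|⁻¹ if |ζ − c| < 1, and ‖a^{1/2}·(a − ζ·1)⁻¹‖ ≤ (c + 1)^{1/2}·c(ψ)·|ζ − c|^{−1/2} if |ζ − c| ≥ 1. -/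

import Mathlib

/-!
Write `ζ = c + r e^{iψ}` and, for `x ≥ c`, `t = x - c`. The distance `|x - ζ| = |t - r e^{iψ}|`
is at least `max(t, r) / c(ψ)`: if `cos ψ ≤ 0` the triangle `0, t, r e^{iψ}` has an obtuse angle
at `0`, and otherwise `|sin ψ|` times either side is at most the distance from its endpoint to the
line through the other side. With `m = c(ψ) |x - ζ|`, the elementary inequality
`(c + t) ρ ≤ (c + 1) m²` for `0 < ρ ≤ min(r, r²)` becomes `√x / |x - ζ| ≤ √(c+1) c(ψ) / √ρ` on the
spectrum, and the continuous functional calculus turns this into the bound on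
`‖a^{1/2} (a - ζ)⁻¹‖`; take `ρ = r²` if `r < 1` and `ρ = r` if `r ≥ 1`.
-/

/-- The coefficient `c(ψ)` from the paper, for `ψ ∈ (0, 2π)`:
`c(ψ) = 1/|sin ψ|` if `ψ ∈ (0, π/2) ∪ (3π/2, 2π)`, and `c(ψ) = 1` if `ψ ∈ [π/2, 3π/2]`. -/
noncomputable def cArg (ψ : ℝ) : ℝ :=
  if (0 < ψ ∧ ψ < Real.pi / 2) ∨ (3 * Real.pi / 2 < ψ ∧ ψ < 2 * Real.pi) then
    |Real.sin ψ|⁻¹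
  else 1

lemma cArg_nonneg (ψ : ℝ) : 0 ≤ cArg ψ := by
  unfold cArg; split <;> positivity

section Geometry

open Complex

lemma norm_ofReal_sub_mul_exp_sq (t r ψ : ℝ) :
    ‖(t : ℂ) - r * exp (ψ * I)‖ ^ 2 = (t - r * Real.cos ψ) ^ 2 + (r * Real.sin ψ) ^ 2 := by
  rw [Complex.sq_norm, normSq_apply]
  simp only [sub_re, ofReal_re, mul_re, exp_ofReal_mul_I_re, ofReal_im, exp_ofReal_mul_I_im,
    sub_im, mul_im]
  ring

lemma max_mul_abs_sin_le_norm (t r ψ : ℝ) :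
    max t r * |Real.sin ψ| ≤ ‖(t : ℂ) - r * exp (ψ * I)‖ := by
  rw [max_mul_of_nonneg _ _ (abs_nonneg _)]
  refine max_le ?_ ?_ <;>
    refine (le_abs_self _).trans (abs_le_of_sq_le_sq ?_ (norm_nonneg _)) <;>
    rw [mul_pow, sq_abs, norm_ofReal_sub_mul_exp_sq]
  · linear_combination (t ^ 2 - r ^ 2) * Real.sin_sq_add_cos_sq ψ + sq_nonneg (t * Real.cos ψ - r)
  · nlinarith [sq_nonneg (t - r * Real.cos ψ)]

lemma max_le_norm_of_cos_nonpos {t r ψ : ℝ} (ht : 0 ≤ t) (hr : 0 ≤ r) (hψ : Real.cos ψ ≤ 0) :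
    max t r ≤ ‖(t : ℂ) - r * exp (ψ * I)‖ := by
  refine max_le ?_ ?_ <;> refine abs_le_of_sq_le_sq' ?_ (norm_nonneg _) |>.2 <;>
    rw [norm_ofReal_sub_mul_exp_sq] <;>
    nlinarith [mul_nonneg (mul_nonneg ht hr) (neg_nonneg.2 hψ), Real.sin_sq_add_cos_sq ψ]

lemma sin_ne_zero_of_pos_of_lt_two_pi {ψ : ℝ} (h0 : 0 < ψ) (h2π : ψ < 2 * Real.pi)
    (hπ : ψ ≠ Real.pi) : Real.sin ψ ≠ 0 := by
  rw [← neg_ne_zero, ← Real.sin_sub_pi, Ne,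
    Real.sin_eq_zero_iff_of_lt_of_lt (by linarith) (by linarith)]
  exact sub_ne_zero.2 hπ

lemma max_le_cArg_mul_norm {t r ψ : ℝ} (ht : 0 ≤ t) (hr : 0 ≤ r)
    (hψ : ψ ∈ Set.Ioo 0 (2 * Real.pi)) :
    max t r ≤ cArg ψ * ‖(t : ℂ) - r * exp (ψ * I)‖ := by
  have := Real.pi_pos
  unfold cArg
  split_ifs with h
  · have hsin : Real.sin ψ ≠ 0 :=
      sin_ne_zero_of_pos_of_lt_two_pi hψ.1 hψ.2 (by rintro rfl; rcases h with h | h <;> linarith)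
    rw [le_inv_mul_iff₀ (abs_pos.2 hsin), mul_comm]
    exact max_mul_abs_sin_le_norm t r ψ
  · push Not at h
    rw [one_mul]
    refine max_le_norm_of_cos_nonpos ht hr (Real.cos_nonpos_of_pi_div_two_le_of_le ?_ ?_)
    · by_contra! h'; linarith [h.1 hψ.1]
    · by_contra! h'; linarith [h.2 (by linarith), hψ.2]

lemma add_mul_le_add_one_mul_sq {c t r ρ m : ℝ} (hc : 0 ≤ c) (ht : 0 ≤ t) (hr : 0 ≤ r)
    (hρr : ρ ≤ r) (hρr2 : ρ ≤ r ^ 2) (htm : t ≤ m) (hrm : r ≤ m) :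
    (c + t) * ρ ≤ (c + 1) * m ^ 2 := by
  nlinarith [mul_le_mul_of_nonneg_left hρr ht, mul_le_mul_of_nonneg_left hρr2 hc,
    mul_le_mul htm hrm hr (ht.trans htm), pow_le_pow_left₀ hr hrm 2]

lemma sqrt_div_norm_sub_le {c x r ψ ρ : ℝ} (hc : 0 ≤ c) (hx : c ≤ x) (hr : 0 ≤ r)
    (hψ : ψ ∈ Set.Ioo 0 (2 * Real.pi)) (hρ : 0 < ρ) (hρr : ρ ≤ r) (hρr2 : ρ ≤ r ^ 2) :
    √x / ‖(x : ℂ) - (c + r * exp (ψ * I))‖ ≤ √(c + 1) * cArg ψ / √ρ := by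
  set d := ‖(x : ℂ) - (c + r * exp (ψ * I))‖
  have hdist : max (x - c) r ≤ cArg ψ * d := by
    convert max_le_cArg_mul_norm (sub_nonneg.2 hx) hr hψ using 3
    push_cast; ring
  have key : x * ρ ≤ (c + 1) * (cArg ψ * d) ^ 2 := by
    simpa using add_mul_le_add_one_mul_sq hc (sub_nonneg.2 hx) hr hρr hρr2
      ((le_max_left _ _).trans hdist) ((le_max_right _ _).trans hdist)
  have hKd : 0 ≤ cArg ψ * d := mul_nonneg (cArg_nonneg ψ) (norm_nonneg _)
  refine div_le_of_le_mul₀ (norm_nonneg _)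
    (div_nonneg (mul_nonneg (Real.sqrt_nonneg _) (cArg_nonneg ψ)) (Real.sqrt_nonneg _)) ?_
  calc √x = √(x * ρ) / √ρ := by
        rw [Real.sqrt_mul (hc.trans hx), mul_div_cancel_right₀ _ (Real.sqrt_pos.2 hρ).ne']
    _ ≤ √((c + 1) * (cArg ψ * d) ^ 2) / √ρ := by gcongr
    _ = √(c + 1) * cArg ψ / √ρ * d := by
        rw [Real.sqrt_mul (by linarith), Real.sqrt_sq hKd]; ring

end Geometry

section CStarAlgebra

variable {A : Type*} [CStarAlgebra A]

lemma sub_smul_one_eq_cfc (a : A) [IsStarNormal a] (ζ : ℂ) :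
    a - ζ • (1 : A) = cfc (fun z ↦ z - ζ) a := by
  rw [cfc_sub .., cfc_id' .., cfc_const .., Algebra.algebraMap_eq_smul_one]

lemma isUnit_sub_smul_one {a : A} [IsStarNormal a] {ζ : ℂ} (hζ : ζ ∉ spectrum ℂ a) :
    IsUnit (a - ζ • (1 : A)) := by
  rw [sub_smul_one_eq_cfc, isUnit_cfc_iff (fun z ↦ z - ζ) a]
  rintro z hz hzζ
  exact hζ (sub_eq_zero.1 hzζ ▸ hz)

lemma ringInverse_sub_smul_one_eq_cfc {a : A} [IsStarNormal a] {ζ : ℂ} (hζ : ζ ∉ spectrum ℂ a) :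
    Ring.inverse (a - ζ • (1 : A)) = cfc (fun z ↦ (z - ζ)⁻¹) a := by
  rw [sub_smul_one_eq_cfc, cfc_inv (fun z ↦ z - ζ) a]
  rintro z hz hzζ
  exact hζ (sub_eq_zero.1 hzζ ▸ hz)

variable [PartialOrder A] [StarOrderedRing A]

lemma eq_cfc_sqrt_re_of_mul_self_eq {a b : A} (ha : 0 ≤ a) (hb : 0 ≤ b) (hba : b * b = a) :
    b = cfc (fun z : ℂ ↦ (√z.re : ℂ)) a := by
  rw [← CFC.sqrt_unique hba hb, CFC.sqrt_eq_real_sqrt a ha, cfcₙ_eq_cfc, cfc_real_eq_complex]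

lemma norm_mul_ringInverse_sub_smul_one_le {a b : A} (ha : 0 ≤ a) (hb : 0 ≤ b)
    (hba : b * b = a) {ζ : ℂ} (hζ : ζ ∉ spectrum ℂ a) {C : ℝ} (hC : 0 ≤ C)
    (hbound : ∀ z ∈ spectrum ℂ a, √z.re / ‖z - ζ‖ ≤ C) :
    ‖b * Ring.inverse (a - ζ • (1 : A))‖ ≤ C := by
  have : IsStarNormal a := ha.isSelfAdjoint.isStarNormal
  have hcont : ContinuousOn (fun z : ℂ ↦ (z - ζ)⁻¹) (spectrum ℂ a) :=
    ContinuousOn.inv₀ (by fun_prop) fun z hz hzζ ↦ hζ (sub_eq_zero.1 hzζ ▸ hz)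
  rw [eq_cfc_sqrt_re_of_mul_self_eq ha hb hba, ringInverse_sub_smul_one_eq_cfc hζ,
    ← cfc_mul _ _ a (by fun_prop) hcont]
  refine norm_cfc_le hC fun z hz ↦ ?_
  simpa [abs_of_nonneg (Real.sqrt_nonneg _), div_eq_mul_inv] using hbound z hz

end CStarAlgebra

theorem sqrt_mul_resolvent_norm_bound_general {A : Type*} [CStarAlgebra A]
    [PartialOrder A] [StarOrderedRing A]
    (a : A) (ha0 : 0 ≤ a) (c : ℝ) (hc : 0 ≤ c)
    (hspec : spectrum ℂ a ⊆ Complex.ofReal '' Set.Ici c)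
    (ζ : ℂ) (ψ : ℝ)
    (hζ : ∀ x : ℝ, c ≤ x → ζ ≠ (x : ℂ))
    (hψ : ψ ∈ Set.Ioo (0 : ℝ) (2 * Real.pi))
    (hζψ : ζ - (c : ℂ) = (‖ζ - (c : ℂ)‖ : ℂ) * Complex.exp ((ψ : ℂ) * Complex.I)) :
    IsUnit (a - ζ • (1 : A)) ∧
      ∀ b : A, IsSelfAdjoint b → 0 ≤ b → b * b = a →
        (‖ζ - (c : ℂ)‖ < 1 →
          ‖b * Ring.inverse (a - ζ • (1 : A))‖
            ≤ Real.sqrt (c + 1) * cArg ψ * (‖ζ - (c : ℂ)‖)⁻¹) ∧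
        (1 ≤ ‖ζ - (c : ℂ)‖ →
          ‖b * Ring.inverse (a - ζ • (1 : A))‖
            ≤ Real.sqrt (c + 1) * cArg ψ * (Real.sqrt (‖ζ - (c : ℂ)‖))⁻¹) := by
  have : IsStarNormal a := ha0.isSelfAdjoint.isStarNormal
  have hζa : ζ ∉ spectrum ℂ a := fun h ↦ by
    obtain ⟨x, hx, hxζ⟩ := hspec h
    exact hζ x hx hxζ.symm
  set r := ‖ζ - (c : ℂ)‖
  have hr : 0 < r := norm_pos_iff.2 (sub_ne_zero.2 (hζ c le_rfl))
  have hζ_eq : ζ = c + r * Complex.exp (ψ * Complex.I) := by rw [← hζψ]; ring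
  refine ⟨isUnit_sub_smul_one hζa, fun b _ hb hba ↦ ?_⟩
  have key (ρ : ℝ) (hρ : 0 < ρ) (hρr : ρ ≤ r) (hρr2 : ρ ≤ r ^ 2) :
      ‖b * Ring.inverse (a - ζ • (1 : A))‖ ≤ √(c + 1) * cArg ψ * (√ρ)⁻¹ := by
    refine norm_mul_ringInverse_sub_smul_one_le ha0 hb hba hζa
      (by have := cArg_nonneg ψ; positivity) fun z hz ↦ ?_
    obtain ⟨x, hx, rfl⟩ := hspec hz
    rw [Complex.ofReal_re, hζ_eq, ← div_eq_mul_inv]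
    exact sqrt_div_norm_sub_le hc hx hr.le hψ hρ hρr hρr2
  refine ⟨fun hr1 ↦ ?_, fun hr1 ↦ key r hr le_rfl (by nlinarith)⟩
  simpa [Real.sqrt_sq hr.le] using key (r ^ 2) (by positivity) (by nlinarith) le_rfl

/-- In a unital C*-algebra, let `a` be selfadjoint with `0 ≤ a` and spectrum contained in
`[c,∞)` (`c ≥ 0`). Then for `ζ ∈ ℂ \ [c,∞)` with `ψ = arg(ζ − c) ∈ (0, 2π)` the element
`a − ζ·1` is invertible, and the (unique) positive square root `b = a^{1/2}` (i.e. any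
selfadjoint `b ≥ 0` with `b² = a`) satisfies
`‖a^{1/2}(a − ζ·1)⁻¹‖ ≤ (c+1)^{1/2} c(ψ) |ζ − c|⁻¹` if `|ζ − c| < 1`, and
`‖a^{1/2}(a − ζ·1)⁻¹‖ ≤ (c+1)^{1/2} c(ψ) |ζ − c|^{−1/2}` if `|ζ − c| ≥ 1`. -/
theorem sqrt_mul_resolvent_norm_bound {A : Type*} [CStarAlgebra A]
    [PartialOrder A] [StarOrderedRing A]
    (a : A) (ha : IsSelfAdjoint a) (ha0 : 0 ≤ a) (c : ℝ) (hc : 0 ≤ c)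
    (hspec : spectrum ℂ a ⊆ Complex.ofReal '' Set.Ici c)
    (ζ : ℂ) (ψ : ℝ)
    (hζ : ∀ x : ℝ, c ≤ x → ζ ≠ (x : ℂ))
    (hψ : ψ ∈ Set.Ioo (0 : ℝ) (2 * Real.pi))
    (hζψ : ζ - (c : ℂ) = (‖ζ - (c : ℂ)‖ : ℂ) * Complex.exp ((ψ : ℂ) * Complex.I)) :
    IsUnit (a - ζ • (1 : A)) ∧
      ∀ b : A, IsSelfAdjoint b → 0 ≤ b → b * b = a →
        (‖ζ - (c : ℂ)‖ < 1 →
          ‖b * Ring.inverse (a - ζ • (1 : A))‖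
            ≤ Real.sqrt (c + 1) * cArg ψ * (‖ζ - (c : ℂ)‖)⁻¹) ∧
        (1 ≤ ‖ζ - (c : ℂ)‖ →
          ‖b * Ring.inverse (a - ζ • (1 : A))‖
            ≤ Real.sqrt (c + 1) * cArg ψ * (Real.sqrt (‖ζ - (c : ℂ)‖))⁻¹) :=
  sqrt_mul_resolvent_norm_bound_general a ha0 c hc hspec ζ ψ hζ hψ hζψ
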